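/- The number of reduced words for an element w of a Coxeter group equals the sum, over all commutation classes of reduced words for w (equivalently, over the corresponding word posets P ∈ WP(w)), of the number E(P) of linear extensions of P. -/

import Mathlib

def SwapStep {S : Type*} (R : S → S → Prop) (u v : List S) : Prop :=
  ∃ (x y : List S) (a b : S), R a b ∧ u = x ++ a :: b :: y ∧ v = x ++ b :: a :: y

/-- Heap order on the positions of a word. -/
def HeapLE {S : Type*} (R : S → S → Prop) {m : ℕ} (w : Fin m → S) :
    Fin m → Fin m → Prop :=
  Relation.ReflTransGen (fun i j => i ≤ j ∧ (w i = w j ∨ ¬ R (w i) (w j)))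

/-- The number `E(P)` of linear extensions of the word poset (heap) of the word `ω`,
with respect to the commutation relation `M a b = 2` of a Coxeter matrix `M`. -/
noncomputable def ExtCount {B : Type*} (M : CoxeterMatrix B) (ω : List B) : ℕ :=
  Nat.card {e : Fin ω.length ≃ Fin ω.length //
    ∀ i j : Fin ω.length, HeapLE (fun a b => M a b = 2) ω.get i j → e i ≤ e j}

/-!
Write the letters of a word `ω` as `w : Fin m → S`. A linear extension `e` of its heap gives the
word `w ∘ e⁻¹` (`e` sends each position of `ω` to its position in the new word), and this is a
bijection onto the commutation class of `ω`. It is injective because equal letters are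
comparable in the heap, so the occurrences of each letter keep their relative order. Swapping
two adjacent commuting letters of the word of `e` composes `e` with an adjacent transposition and
keeps it a linear extension, so the image is closed under commutation moves; conversely,
undoing a descent of `e` lowers its number of inversions, so every linear extension is reached
from the identity by such moves. A commutation move `ab ↦ ba` with `m(a, b) = 2` preserves the
product and the length, so the reduced words for `w` are a union of commutation classes, and
their number is the sum of the class sizes.
-/

open Relation

section ListSwap

variable {S : Type*} {m : ℕ}

theorem List.ofFn_comp_swap {f : Fin m → S} {x y : List S} {a b : S}
    (h : List.ofFn f = x ++ a :: b :: y) {k₀ k₁ : Fin m} (hk₀ : (k₀ : ℕ) = x.length)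
    (hk₁ : (k₁ : ℕ) = x.length + 1) :
    List.ofFn (f ∘ Equiv.swap k₀ k₁) = x ++ b :: a :: y := by
  have hf : ∀ j, f j = (x ++ a :: b :: y)[(j : ℕ)]'(by simp [← h]) := fun j => by
    simp only [← h, List.getElem_ofFn]
  apply List.ext_getElem (by rw [List.length_ofFn, ← List.length_ofFn (f := f), h]; simp)
  intro i _ _
  simp only [List.getElem_ofFn, Function.comp_apply, hf, Equiv.swap_apply_def, Fin.ext_iff,
    hk₀, hk₁]
  split_ifs <;> simp only [List.getElem_append, List.getElem_cons, hk₀, hk₁] <;> split_ifs <;>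
    first | rfl | omega

theorem List.ofFn_eq_take_append_cons_cons (f : Fin m → S) {k₀ k₁ : Fin m}
    (hk : (k₀ : ℕ) + 1 = k₁) :
    List.ofFn f = (List.ofFn f).take k₀ ++ f k₀ :: f k₁ :: (List.ofFn f).drop (k₀ + 2) := by
  conv_lhs => rw [← List.take_append_drop k₀ (List.ofFn f), List.drop_eq_getElem_cons (by simp),
    List.drop_eq_getElem_cons (by simp; omega)]
  simp only [List.getElem_ofFn, List.append_cancel_left_eq, List.cons.injEq, true_and, and_true]
  exact congrArg f (Fin.ext hk)

variable {R : S → S → Prop}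

instance [Std.Symm R] : Std.Symm (SwapStep R) where
  symm _ _ := fun ⟨x, y, a, b, hab, hu, hv⟩ => ⟨x, y, b, a, Std.Symm.symm _ _ hab, hv, hu⟩

theorem SwapStep.length_eq {u v : List S} (h : SwapStep R u v) : u.length = v.length := by
  obtain ⟨x, y, a, b, -, rfl, rfl⟩ := h
  simp

theorem swapStep_ofFn_comp_swap {f : Fin m → S} {k₀ k₁ : Fin m} (hk : (k₀ : ℕ) + 1 = k₁)
    (hR : R (f k₀) (f k₁)) : SwapStep R (List.ofFn f) (List.ofFn (f ∘ Equiv.swap k₀ k₁)) :=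
  have h := List.ofFn_eq_take_append_cons_cons f hk
  ⟨_, _, _, _, hR, h, List.ofFn_comp_swap h (by simp) (by simp; omega)⟩

theorem exists_eq_ofFn_comp_swap_of_swapStep {f : Fin m → S} {v : List S}
    (h : SwapStep R (List.ofFn f) v) : ∃ k₀ k₁ : Fin m, (k₀ : ℕ) + 1 = k₁ ∧ R (f k₀) (f k₁) ∧
      v = List.ofFn (f ∘ Equiv.swap k₀ k₁) := by
  obtain ⟨x, y, a, b, hab, hu, rfl⟩ := h
  have hm : x.length + 1 < m := by
    have := congrArg List.length hu
    simp only [List.length_ofFn, List.length_append, List.length_cons] at this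
    omega
  have hf : ∀ (i : ℕ) (hi : i < m), f ⟨i, hi⟩ = (x ++ a :: b :: y)[i]'(by simp [← hu, hi]) :=
    fun i hi => by simp only [← hu, List.getElem_ofFn]
  refine ⟨⟨x.length, by omega⟩, ⟨x.length + 1, hm⟩, rfl, ?_,
    (List.ofFn_comp_swap hu rfl rfl).symm⟩
  simpa [hf] using hab

end ListSwap

section Heap

variable {S : Type*} {R : S → S → Prop} {m : ℕ} {w : Fin m → S}

def HeapStep (R : S → S → Prop) (w : Fin m → S) (i j : Fin m) : Prop :=
  i ≤ j ∧ (w i = w j ∨ ¬ R (w i) (w j))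

def IsLinearExt (R : S → S → Prop) (w : Fin m → S) (e : Fin m ≃ Fin m) : Prop :=
  ∀ i j, HeapLE R w i j → e i ≤ e j

def extWord (w : Fin m → S) (e : Fin m ≃ Fin m) : List S :=
  List.ofFn (w ∘ e.symm)

theorem le_of_heapLE {i j : Fin m} (h : HeapLE R w i j) : i ≤ j := by
  simpa [reflTransGen_eq_self] using h.lift id fun _ _ hs => hs.1

theorem isLinearExt_of_heapStep {e : Fin m ≃ Fin m}
    (he : ∀ i j, HeapStep R w i j → e i ≤ e j) : IsLinearExt R w e := fun _ _ h => by
  simpa [reflTransGen_eq_self] using h.lift e he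

theorem isLinearExt_refl : IsLinearExt R w (Equiv.refl _) := fun _ _ => le_of_heapLE

theorem Fin.swap_le_swap {k₀ k₁ x y : Fin m} (hk : (k₀ : ℕ) + 1 = k₁) (hxy : x ≤ y)
    (hne : ¬(x = k₀ ∧ y = k₁)) : Equiv.swap k₀ k₁ x ≤ Equiv.swap k₀ k₁ y := by
  simp only [Equiv.swap_apply_def, Fin.ext_iff, Fin.le_def] at *
  split_ifs <;> omega

theorem IsLinearExt.trans_swap {e : Fin m ≃ Fin m} (he : IsLinearExt R w e) {k₀ k₁ : Fin m}
    (hk : (k₀ : ℕ) + 1 = k₁) (hno : ¬ HeapStep R w (e.symm k₀) (e.symm k₁)) :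
    IsLinearExt R w (e.trans (Equiv.swap k₀ k₁)) := by
  refine isLinearExt_of_heapStep fun i j hij => Fin.swap_le_swap hk (he i j (.single hij)) ?_
  rintro ⟨rfl, rfl⟩
  simp only [Equiv.symm_apply_apply] at hno
  exact hno hij

theorem extWord_trans_swap (e : Fin m ≃ Fin m) (k₀ k₁ : Fin m) :
    extWord w (e.trans (Equiv.swap k₀ k₁)) = List.ofFn ((w ∘ e.symm) ∘ Equiv.swap k₀ k₁) := by
  simp [extWord, Function.comp_def]

theorem IsLinearExt.exists_extWord_eq_of_swapStep [Std.Irrefl R] {e : Fin m ≃ Fin m}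
    (he : IsLinearExt R w e) {v : List S} (h : SwapStep R (extWord w e) v) :
    ∃ e', IsLinearExt R w e' ∧ extWord w e' = v := by
  obtain ⟨k₀, k₁, hk, hR, rfl⟩ := exists_eq_ofFn_comp_swap_of_swapStep h
  refine ⟨e.trans (Equiv.swap k₀ k₁), he.trans_swap hk ?_, extWord_trans_swap e k₀ k₁⟩
  rintro ⟨-, heq | hnR⟩
  · rw [Function.comp_apply, Function.comp_apply, heq] at hR
    exact Std.Irrefl.irrefl _ hR
  · exact hnR hR

theorem exists_isLinearExt_extWord_eq [Std.Irrefl R] {u : List S}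
    (h : ReflTransGen (SwapStep R) (List.ofFn w) u) : ∃ e, IsLinearExt R w e ∧ extWord w e = u := by
  induction h with
  | refl => exact ⟨Equiv.refl _, isLinearExt_refl, rfl⟩
  | tail _ hs ih =>
    obtain ⟨e, he, rfl⟩ := ih
    exact he.exists_extWord_eq_of_swapStep hs

theorem IsLinearExt.not_symm_apply_lt {e f : Fin m ≃ Fin m} (hf : IsLinearExt R w f) {k : Fin m}
    (hw : w (e.symm k) = w (f.symm k)) (hlt : ∀ l < k, e.symm l = f.symm l) :
    ¬ e.symm k < f.symm k := by
  intro hk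
  have hle : f (e.symm k) ≤ k := by simpa using hf _ _ (.single ⟨hk.le, .inl hw⟩)
  have hne : f (e.symm k) ≠ k := fun h => hk.ne (f.eq_symm_apply.2 h)
  have heq := hlt _ (lt_of_le_of_ne hle hne)
  rw [f.symm_apply_apply] at heq
  exact hne (e.symm.injective heq)

theorem IsLinearExt.eq_of_extWord_eq {e f : Fin m ≃ Fin m} (he : IsLinearExt R w e)
    (hf : IsLinearExt R w f) (h : extWord w e = extWord w f) : e = f := by
  have hw := congrFun (List.ofFn_injective h)
  suffices e.symm = f.symm from Equiv.symm_bijective.injective this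
  ext1 k
  induction k using WellFoundedLT.induction with
  | _ k ih =>
    exact le_antisymm (not_lt.1 (he.not_symm_apply_lt (hw k).symm fun l hl => (ih l hl).symm))
      (not_lt.1 (hf.not_symm_apply_lt (hw k) ih))

def inversions (e : Fin m ≃ Fin m) : Finset (Fin m × Fin m) :=
  {p | p.1 < p.2 ∧ e p.2 < e p.1}

theorem mem_inversions {e : Fin m ≃ Fin m} {p : Fin m × Fin m} :
    p ∈ inversions e ↔ p.1 < p.2 ∧ e p.2 < e p.1 := by
  simp [inversions]

theorem card_inversions_trans_swap_lt {e : Fin m ≃ Fin m} {k₀ k₁ : Fin m}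
    (hk : (k₀ : ℕ) + 1 = k₁) (hdes : e.symm k₁ < e.symm k₀) :
    (inversions (e.trans (Equiv.swap k₀ k₁))).card < (inversions e).card := by
  have hk' : k₀ < k₁ := Fin.lt_def.2 (by omega)
  refine Finset.card_lt_card ((Finset.ssubset_iff_of_subset ?_).2 ⟨(e.symm k₁, e.symm k₀), ?_⟩)
  · intro p hp
    rw [mem_inversions, Equiv.trans_apply, Equiv.trans_apply] at hp
    rw [mem_inversions]
    refine ⟨hp.1, lt_of_not_ge fun hle => hp.2.not_ge (Fin.swap_le_swap hk hle ?_)⟩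
    rintro ⟨h₁, h₂⟩
    rw [← e.symm_apply_eq.2 h₁.symm, ← e.symm_apply_eq.2 h₂.symm] at hp
    exact hp.1.not_gt hdes
  · simp [mem_inversions, hdes, hk', hk'.not_gt]

theorem Equiv.eq_refl_of_forall_le_succ {e : Fin m ≃ Fin m}
    (h : ∀ k₀ k₁ : Fin m, (k₀ : ℕ) + 1 = k₁ → e k₀ ≤ e k₁) : e = Equiv.refl _ := by
  have hmono : Monotone e := by
    cases m with
    | zero => exact fun a => a.elim0
    | succ n => exact Fin.monotone_iff_le_succ.2 fun i => h _ _ (by simp)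
  exact Equiv.ext fun _ => (hmono.strictMono_of_injective e.injective).apply_eq

theorem IsLinearExt.reflTransGen_swapStep [Std.Symm R] {e : Fin m ≃ Fin m}
    (he : IsLinearExt R w e) : ReflTransGen (SwapStep R) (List.ofFn w) (extWord w e) := by
  induction hn : (inversions e).card using Nat.strong_induction_on generalizing e with
  | _ n ih =>
  by_cases hsorted : ∀ k₀ k₁ : Fin m, (k₀ : ℕ) + 1 = k₁ → e.symm k₀ ≤ e.symm k₁
  · obtain rfl : e = Equiv.refl _ :=
      Equiv.symm_bijective.injective (Equiv.eq_refl_of_forall_le_succ hsorted)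
    rfl
  push Not at hsorted
  obtain ⟨k₀, k₁, hk, hdes⟩ := hsorted
  have hR : R (w (e.symm k₀)) (w (e.symm k₁)) := by
    by_contra hnR
    have := he _ _ (.single ⟨hdes.le, .inr fun h => hnR (Std.Symm.symm _ _ h)⟩)
    simp only [Equiv.apply_symm_apply, Fin.le_def] at this
    omega
  have he' := he.trans_swap hk fun h => h.1.not_gt hdes
  have hstep := swapStep_ofFn_comp_swap (f := w ∘ e.symm) hk hR
  rw [← extWord_trans_swap] at hstep
  exact (ih _ (hn ▸ card_inversions_trans_swap_lt hk hdes) he' rfl).tail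
    (Std.Symm.symm _ _ hstep)

noncomputable def linearExtEquivCommClass [Std.Symm R] [Std.Irrefl R] (ω : List S) :
    {e // IsLinearExt R ω.get e} ≃ {u // ReflTransGen (SwapStep R) ω u} :=
  Equiv.ofBijective
    (fun e => ⟨extWord ω.get e.1, by simpa only [List.ofFn_get] using e.2.reflTransGen_swapStep⟩)
    ⟨fun e f h => Subtype.ext (e.2.eq_of_extWord_eq f.2 (congrArg Subtype.val h)), fun u =>
      let ⟨e, he, hu⟩ := exists_isLinearExt_extWord_eq (by simpa only [List.ofFn_get] using u.2)
      ⟨⟨e, he⟩, Subtype.ext hu⟩⟩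

end Heap

section Fibers

theorem Nat.card_eq_finsum_card_fiber {α β : Type*} {f : α → β} (hf : Function.Surjective f)
    (hfin : ∀ b, Finite {a // f a = b}) : Nat.card α = ∑ᶠ b, Nat.card {a // f a = b} := by
  rcases finite_or_infinite β with hβ | hβ
  · have := Fintype.ofFinite β
    rw [finsum_eq_sum_of_fintype, ← Nat.card_sigma, Nat.card_congr (Equiv.sigmaFiberEquiv f)]
  · have : Infinite α := Infinite.of_surjective f hf
    rw [Nat.card_eq_zero_of_infinite, finsum_of_infinite_support]
    convert Set.infinite_univ (α := β)
    exact Set.eq_univ_of_forall fun b =>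
      (Nat.card_pos_iff.2 ⟨⟨⟨_, (hf b).choose_spec⟩⟩, hfin b⟩).ne'

variable {α : Type*} {r : α → α → Prop} {P : α → Prop}

theorem Relation.ReflTransGen.exists_subtype (hP : ∀ a b, r a b → P a → P b) {t : Subtype P}
    {a : α} (h : ReflTransGen r t a) :
    ∃ ha : P a, ReflTransGen (fun u v : Subtype P => r u v) t ⟨a, ha⟩ := by
  induction h with
  | refl => exact ⟨t.2, .refl⟩
  | tail _ hbc ih =>
    obtain ⟨hb, ih⟩ := ih
    exact ⟨hP _ _ hbc hb, ih.tail hbc⟩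

theorem Quot.mk_subtype_eq_iff_reflTransGen [Std.Symm r] (hP : ∀ a b, r a b → P a → P b) {s t : Subtype P} :
    Quot.mk (fun u v : Subtype P => r u v) s = Quot.mk _ t ↔ ReflTransGen r s t := by
  have : Std.Symm fun u v : Subtype P => r u v := ⟨fun _ _ h => Std.Symm.symm _ _ h⟩
  rw [Quot.eq, EqvGen.eqvGen_eq_reflTransGen]
  exact ⟨fun h => h.lift Subtype.val fun _ _ => id, fun h => (h.exists_subtype hP).2⟩

def Quot.subtypeFiberEquiv [Std.Symm r] (hP : ∀ a b, r a b → P a → P b) (t : Subtype P) :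
    {s // Quot.mk (fun u v : Subtype P => r u v) s = Quot.mk _ t} ≃ {a // ReflTransGen r t a} :=
  (Equiv.subtypeEquivRight fun _ => eq_comm.trans (Quot.mk_subtype_eq_iff_reflTransGen hP)).trans
    ((Equiv.subtypeSubtypeEquivSubtypeInter P _).trans
      (Equiv.subtypeEquivRight fun _ => and_iff_right_of_imp fun h => (h.exists_subtype hP).1))

end Fibers

instance CoxeterMatrix.instSymmCommute {B : Type*} (M : CoxeterMatrix B) :
    Std.Symm fun a b : B => M a b = 2 :=
  ⟨fun a b h => by rwa [M.symmetric]⟩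

instance CoxeterMatrix.instIrreflCommute {B : Type*} (M : CoxeterMatrix B) :
    Std.Irrefl fun a b : B => M a b = 2 :=
  ⟨fun a h => by simp at h⟩

namespace CoxeterSystem

variable {B W : Type*} [Group W] {M : CoxeterMatrix B} (cs : CoxeterSystem M W)

theorem wordProd_eq_of_swapStep {u v : List B} (h : SwapStep (fun a b => M a b = 2) u v) :
    cs.wordProd u = cs.wordProd v := by
  obtain ⟨x, y, a, b, hab, rfl, rfl⟩ := h
  have hcomm : cs.simple a * cs.simple b = cs.simple b * cs.simple a := by
    have h := cs.simple_mul_simple_pow a b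
    rwa [hab, sq, mul_eq_one_iff_eq_inv, mul_inv_rev, cs.inv_simple, cs.inv_simple] at h
  simp only [wordProd_append, wordProd_cons]
  rw [← mul_assoc (cs.simple a), hcomm, mul_assoc]

theorem isReduced_of_swapStep {u v : List B} (h : SwapStep (fun a b => M a b = 2) u v)
    (hu : cs.IsReduced u) : cs.IsReduced v := by
  rwa [IsReduced, ← cs.wordProd_eq_of_swapStep h, ← h.length_eq]

end CoxeterSystem

/-- The number of reduced words for `w` equals the sum, over the commutation classes of
reduced words for `w` (i.e. over the corresponding word posets `P ∈ WP(w)`), of the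
number `E(P)` of linear extensions of `P`. -/
theorem stmt12 {B : Type*} {W : Type*} [Group W] {M : CoxeterMatrix B}
    (cs : CoxeterSystem M W) (w : W)
    (E : Quot (fun u v : {ω : List B // cs.wordProd ω = w ∧ cs.IsReduced ω} =>
          SwapStep (fun a b => M a b = 2) u.1 v.1) → ℕ)
    (hE : ∀ ω : {ω : List B // cs.wordProd ω = w ∧ cs.IsReduced ω},
        E (Quot.mk _ ω) = ExtCount M ω.1) :
    Nat.card {ω : List B // cs.wordProd ω = w ∧ cs.IsReduced ω} = ∑ᶠ c, E c := by
  have hP : ∀ u v, SwapStep (fun a b => M a b = 2) u v →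
      cs.wordProd u = w ∧ cs.IsReduced u → cs.wordProd v = w ∧ cs.IsReduced v :=
    fun u v h ⟨hw, hred⟩ => ⟨cs.wordProd_eq_of_swapStep h ▸ hw, cs.isReduced_of_swapStep h hred⟩
  have hfiber (t : {ω : List B // cs.wordProd ω = w ∧ cs.IsReduced ω}) :
      {s // Quot.mk _ s = Quot.mk _ t} ≃ {e // IsLinearExt (fun a b => M a b = 2) t.1.get e} :=
    (Quot.subtypeFiberEquiv hP t).trans (linearExtEquivCommClass t.1).symm
  rw [Nat.card_eq_finsum_card_fiber Quot.mk_surjective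
    (Quot.ind fun t => Finite.of_equiv _ (hfiber t).symm)]
  congr 1 with c
  induction c using Quot.ind with
  | mk t => rw [hE, Nat.card_congr (hfiber t)]; rfl
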